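/- arXiv:2312.14916 — 4 statements merged into one kernel-verified Lean document; each statement's English description precedes it below -/
import Mathlib

section
/- Let G = (V,E) be a weighted graph of maximum degree 4 and let v be a vertex whose incident edge weights, in nonincreasing order a ≥ b ≥ c ≥ d (taking weight 0 for missing edges), satisfy a + d > b + c and a < b + c + d (a 'Type II' vertex). Then in any cut, flipping v strictly changes the cut weight. -/
/-- Type II vertex: incident edge weights `a ≥ b ≥ c ≥ d ≥ 0` with `a + d > b + c` and
`a < b + c + d`. In any cut, flipping the vertex changes the cut weight by
`±a ± b ± c ± d` (sign `+` for incident edges in the cut, `-` otherwise), and this change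
is never zero. -/
theorem stmt3 (a b c d : ℤ) (hd : 0 ≤ d) (hdc : d ≤ c) (hcb : c ≤ b) (hba : b ≤ a)
    (hII₁ : b + c < a + d) (hII₂ : a < b + c + d) :
    ∀ s₁ s₂ s₃ s₄ : Bool,
      (if s₁ then a else -a) + (if s₂ then b else -b) +
        (if s₃ then c else -c) + (if s₄ then d else -d) ≠ 0 := by
  intro s₁ s₂ s₃ s₄
  cases s₁ <;> cases s₂ <;> cases s₃ <;> cases s₄ <;> simp only [if_true, if_false, Bool.false_eq_true] <;> omega
end

section
/- Let G = (V,E) be a weighted graph of maximum degree 4 and let v be a vertex whose incident edge weights, in nonincreasing order a ≥ b ≥ c ≥ d (taking weight 0 for missing edges), satisfy a + d < b + c (a 'Type III' vertex). Then in any cut, flipping v strictly changes the cut weight. -/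
/-- Type III vertex: incident edge weights `a ≥ b ≥ c ≥ d ≥ 0` with `a + d < b + c`.
In any cut, flipping the vertex changes the cut weight by `±a ± b ± c ± d` (sign `+` for
incident edges in the cut, `-` otherwise), and this change is never zero. -/
theorem stmt4 (a b c d : ℤ) (hd : 0 ≤ d) (hdc : d ≤ c) (hcb : c ≤ b) (hba : b ≤ a)
    (hIII : a + d < b + c) :
    ∀ s₁ s₂ s₃ s₄ : Bool,
      (if s₁ then a else -a) + (if s₂ then b else -b) +
        (if s₃ then c else -c) + (if s₄ then d else -d) ≠ 0 := by
  intro s₁ s₂ s₃ s₄; cases s₁ <;> cases s₂ <;> cases s₃ <;> cases s₄ <;> simp <;> omega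
end

section
/- Let Φ be a Not-All-Equal SAT instance with clauses of size 2 and 3 where every clause has even integer weight. Replace each size-3 clause NAE(x₁,x₂,x₃) of weight W by the three size-2 clauses NAE(x₁,x₂), NAE(x₂,x₃), NAE(x₁,x₃), each of weight W/2, and keep size-2 clauses unchanged. Then for every truth assignment s, the total weight of satisfied clauses in the new instance equals the total weight of satisfied clauses in Φ. -/
open Finset

/-- Replacing each size-3 NAE clause `NAE(x,y,z)` of even weight `W` by the three size-2
clauses `NAE(x,y)`, `NAE(y,z)`, `NAE(x,z)`, each of weight `W/2` (keeping the size-2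
clauses of the instance unchanged), preserves the total satisfied weight under every
truth assignment `s`. Here `ι` indexes the size-3 clauses (with variables `x y z` and
weights `W`) and `κ` indexes the size-2 clauses (with variables `u v` and weights `w₂`). -/
theorem stmt5 {V ι κ : Type*} [Fintype ι] [Fintype κ]
    (x y z : ι → V) (W : ι → ℤ) (hW : ∀ i, Even (W i))
    (u v : κ → V) (w₂ : κ → ℤ)
    (s : V → Bool) :
    ((∑ j, if s (u j) ≠ s (v j) then w₂ j else 0) +
      ∑ i, if ¬(s (x i) = s (y i) ∧ s (y i) = s (z i)) then W i else 0)
    =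
    ((∑ j, if s (u j) ≠ s (v j) then w₂ j else 0) +
      ∑ i, ((if s (x i) ≠ s (y i) then W i / 2 else 0) +
            (if s (y i) ≠ s (z i) then W i / 2 else 0) +
            (if s (x i) ≠ s (z i) then W i / 2 else 0))) := by
  congr 1
  refine Finset.sum_congr rfl fun i _ => ?_
  obtain ⟨k, hk⟩ := hW i
  have h2 : W i / 2 = k := by omega
  rw [h2]
  rcases hx : s (x i) <;> rcases hy : s (y i) <;> rcases hz : s (z i) <;> simp <;> omega
end

section
/- Let G be the complete graph on an odd number n ≥ 2 of vertices with edge weights w satisfying (1 − 1/n⁹)·w_max ≤ w_min, where w_min and w_max are the minimum and maximum edge weights and w_min ≥ 1. Let (X, Y) be a partition of V with |X| < |Y| − 1. Then for every vertex v ∈ Y, w(X ∪ {v}, Y ∖ {v}) − w(X, Y) > w_min. -/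
/-!
Moving `v` from the larger side to the smaller one turns `|X|·|Y|` cut edges into
`(|X|+1)(|Y|-1) ≥ |X|·|Y| + 2` cut edges, since `|Y| ≥ |X| + 3` by parity. So the new cut weighs at
least `(|X|·|Y| + 2)·w_min`, the old one at most `|X|·|Y|·w_max`, and because `|X|·|Y| ≤ n² < n⁹ - 1`
the closeness of `w_max` to `w_min` gives `|X|·|Y|·w_max < (|X|·|Y| + 1)·w_min`.
-/

open Finset

/-- The weight of the cut `(A, Aᶜ)` in the complete graph with edge weights `w`. -/
def cutw {V : Type*} [Fintype V] [DecidableEq V] (w : V → V → ℕ) (A : Finset V) : ℕ :=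
  ∑ u ∈ A, ∑ v ∈ Aᶜ, w u v

section Cut

variable {V : Type*} [Fintype V] [DecidableEq V] (w : V → V → ℕ) (A : Finset V)

theorem cutw_le_card_mul_card_compl_mul {c : ℕ} (hc : ∀ u v, u ≠ v → w u v ≤ c) :
    cutw w A ≤ #A * #Aᶜ * c := by
  rw [mul_assoc]
  refine sum_le_card_nsmul _ _ _ fun u hu => sum_le_card_nsmul _ _ _ fun v hv => hc u v ?_
  rintro rfl
  exact (mem_compl.mp hv) hu

theorem card_mul_card_compl_mul_le_cutw {c : ℕ} (hc : ∀ u v, u ≠ v → c ≤ w u v) :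
    #A * #Aᶜ * c ≤ cutw w A := by
  rw [mul_assoc]
  refine card_nsmul_le_sum _ _ _ fun u hu => card_nsmul_le_sum _ _ _ fun v hv => hc u v ?_
  rintro rfl
  exact (mem_compl.mp hv) hu

end Cut

theorem card_mul_card_compl_add_two_le_insert {V : Type*} [Fintype V] [DecidableEq V]
    {X : Finset V} {v : V} (hv : v ∈ Xᶜ) (hX : #X + 3 ≤ #Xᶜ) :
    #X * #Xᶜ + 2 ≤ #(insert v X) * #(insert v X)ᶜ := by
  rw [card_insert_of_notMem (by simpa using hv), compl_insert, card_erase_of_mem hv]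
  zify [show 1 ≤ #Xᶜ by omega] at hX ⊢
  nlinarith

theorem mul_lt_add_one_mul_of_one_sub_one_div_mul_le {K : Type*} [Field K] [LinearOrder K]
    [IsStrictOrderedRing K] {m N a b : K} (hm : 0 ≤ m) (hN : m + 1 < N) (hb : 0 < b)
    (hclose : (1 - 1 / N) * a ≤ b) :
    m * a < (m + 1) * b := by
  have hN0 : 0 < N := by linarith
  have hscaled : (N - 1) * a ≤ N * b := by
    have := mul_le_mul_of_nonneg_left hclose hN0.le
    rwa [← mul_assoc, mul_sub, mul_one_div_cancel hN0.ne', mul_one] at this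
  refine lt_of_mul_lt_mul_left (a := N - 1) ?_ (by linarith)
  calc (N - 1) * (m * a) = m * ((N - 1) * a) := by ring
    _ ≤ m * (N * b) := mul_le_mul_of_nonneg_left hscaled hm
    _ < (N - 1) * ((m + 1) * b) := by nlinarith

theorem stmt9_general {V : Type*} [Fintype V] [DecidableEq V] (n : ℕ)
    (hn : Fintype.card V = n) (hodd : Odd n) (h2 : 2 ≤ n)
    (w : V → V → ℕ)
    (wmin wmax : ℕ)
    (hmin : ∀ u v : V, u ≠ v → wmin ≤ w u v)
    (hmax : ∀ u v : V, u ≠ v → w u v ≤ wmax)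
    (h1 : 1 ≤ wmin)
    (hclose : ((1 : ℚ) - 1 / (n : ℚ) ^ 9) * (wmax : ℚ) ≤ (wmin : ℚ))
    (X : Finset V) (hX : X.card + 1 < Xᶜ.card) :
    ∀ v ∈ Xᶜ, cutw w X + wmin < cutw w (insert v X) := by
  intro v hv
  have hsum : #X + #Xᶜ = n := by rw [card_add_card_compl, hn]
  have hgap : #X + 3 ≤ #Xᶜ := by obtain ⟨k, hk⟩ := hodd; omega
  have hsmall : #X * #Xᶜ + 1 < n ^ 9 := by
    have : #X * #Xᶜ ≤ n ^ 2 := by nlinarith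
    have : 2 ^ 7 ≤ n ^ 7 := Nat.pow_le_pow_left h2 7
    have : n ^ 9 = n ^ 2 * n ^ 7 := by ring
    nlinarith
  have hkey : #X * #Xᶜ * wmax < (#X * #Xᶜ + 1) * wmin := by
    exact_mod_cast mul_lt_add_one_mul_of_one_sub_one_div_mul_le (m := ((#X * #Xᶜ : ℕ) : ℚ))
      (by positivity) (by exact_mod_cast hsmall) (by exact_mod_cast h1) hclose
  calc cutw w X + wmin ≤ #X * #Xᶜ * wmax + wmin :=
        Nat.add_le_add_right (cutw_le_card_mul_card_compl_mul w X hmax) _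
    _ < (#X * #Xᶜ + 2) * wmin := by linarith
    _ ≤ #(insert v X) * #(insert v X)ᶜ * wmin :=
        Nat.mul_le_mul_right _ (card_mul_card_compl_add_two_le_insert hv hgap)
    _ ≤ cutw w (insert v X) := card_mul_card_compl_mul_le_cutw w _ hmin

/-- In a complete graph on an odd number `n ≥ 2` of vertices whose edge weights satisfy
`(1 − 1/n⁹)·w_max ≤ w_min` and `w_min ≥ 1`, if `(X, Xᶜ)` is a partition with
`|X| < |Xᶜ| − 1`, then moving any vertex `v ∈ Xᶜ` to `X` increases the cut weight by more
than `w_min`. -/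
theorem stmt9 {V : Type*} [Fintype V] [DecidableEq V] (n : ℕ)
    (hn : Fintype.card V = n) (hodd : Odd n) (h2 : 2 ≤ n)
    (w : V → V → ℕ) (hsym : ∀ u v, w u v = w v u)
    (wmin wmax : ℕ)
    (hmin : ∀ u v : V, u ≠ v → wmin ≤ w u v)
    (hmax : ∀ u v : V, u ≠ v → w u v ≤ wmax)
    (h1 : 1 ≤ wmin)
    (hclose : ((1 : ℚ) - 1 / (n : ℚ) ^ 9) * (wmax : ℚ) ≤ (wmin : ℚ))
    (X : Finset V) (hX : X.card + 1 < Xᶜ.card) :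
    ∀ v ∈ Xᶜ, cutw w X + wmin < cutw w (insert v X) :=
  stmt9_general n hn hodd h2 w wmin wmax hmin hmax h1 hclose X hX
end
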